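/- The group G is contracting with nucleus N = {1, a, b, c, d}; that is, for every g ∈ G there is an integer n such that the state g|_w lies in N for every word w ∈ X* of length at least n, and N is the minimal finite subset of G with this property. -/

import Mathlib

open Equiv

/-! ## The binary rooted tree and the twisted twin of the Grigorchuk group

We identify the vertex set of the infinite rooted binary tree with `V = List Bool`
(the free monoid `X*` on `X = {0,1}`), and realize automorphisms of the tree as
permutations of `V`.  The generators `a, b, c, d` of the twisted twin `G` of the
Grigorchuk group are defined by the recursive rules
`a(xw) = (¬x)w`, `ψ(b) = (c,a)`, `ψ(c) = (a,d)`, `ψ(d) = (1,b)`. -/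

abbrev V : Type := List Bool

def actA : V → V
  | [] => []
  | x :: w => (!x) :: w

theorem actA_invol : Function.Involutive actA := fun w => by
  cases w with
  | nil => rfl
  | cons x w => simp [actA]

mutual
  def actB : V → V
    | [] => []
    | false :: w => false :: actC w
    | true :: w => true :: actA w
  def actC : V → V
    | [] => []
    | false :: w => false :: actA w
    | true :: w => true :: actD w
  def actD : V → V
    | [] => []
    | false :: w => false :: w
    | true :: w => true :: actB w
end

theorem act_invol3 (w : V) :
    actB (actB w) = w ∧ actC (actC w) = w ∧ actD (actD w) = w := by
  induction w with
  | nil => exact ⟨rfl, rfl, rfl⟩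
  | cons x w ih =>
    cases x <;>
      exact ⟨by simp [actB, actC, actD, ih.1, ih.2.1, ih.2.2, actA_invol w],
        by simp [actB, actC, actD, ih.1, ih.2.1, ih.2.2, actA_invol w],
        by simp [actB, actC, actD, ih.1, ih.2.1, ih.2.2, actA_invol w]⟩

theorem actB_invol : Function.Involutive actB := fun w => (act_invol3 w).1
theorem actC_invol : Function.Involutive actC := fun w => (act_invol3 w).2.1
theorem actD_invol : Function.Involutive actD := fun w => (act_invol3 w).2.2

/-- The generator `a`: the root swap. -/
def a : Perm V := actA_invol.toPerm actA
/-- The generator `b`, with `ψ(b) = (c, a)`. -/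
def b : Perm V := actB_invol.toPerm actB
/-- The generator `c`, with `ψ(c) = (a, d)`. -/
def c : Perm V := actC_invol.toPerm actC
/-- The generator `d`, with `ψ(d) = (1, b)`. -/
def d : Perm V := actD_invol.toPerm actD

@[simp] theorem coe_a : ⇑a = actA := rfl
@[simp] theorem coe_b : ⇑b = actB := rfl
@[simp] theorem coe_c : ⇑c = actC := rfl
@[simp] theorem coe_d : ⇑d = actD := rfl

/-- The twisted twin of the Grigorchuk group. -/
def G : Subgroup (Perm V) := Subgroup.closure {a, b, c, d}

theorem a_mem_G : a ∈ G := Subgroup.subset_closure (by simp)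
theorem b_mem_G : b ∈ G := Subgroup.subset_closure (by simp)
theorem c_mem_G : c ∈ G := Subgroup.subset_closure (by simp)
theorem d_mem_G : d ∈ G := Subgroup.subset_closure (by simp)

/-- `hasState g v s` says that the state (section) of `g` at the vertex `v` is `s`,
i.e. `g (v ++ w) = g v ++ s w` for all `w`. -/
def hasState (g : Perm V) (v : V) (s : Perm V) : Prop :=
  ∀ w : V, g (v ++ w) = g v ++ s w

def vstarFun (v : V) (f : V → V) : V → V :=
  fun w => if v <+: w then v ++ f (w.drop v.length) else w

theorem vstarFun_comp (v : V) (f f' : V → V) (w : V) :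
    vstarFun v f (vstarFun v f' w) = vstarFun v (f ∘ f') w := by
  by_cases h : v <+: w
  · obtain ⟨t, rfl⟩ := h
    simp [vstarFun, List.prefix_append, List.drop_left]
  · simp [vstarFun, h]

theorem vstarFun_id (v w : V) : vstarFun v id w = w := by
  by_cases h : v <+: w
  · obtain ⟨t, rfl⟩ := h
    simp [vstarFun, List.prefix_append, List.drop_left]
  · simp [vstarFun, h]

/-- `vstar v g` is the automorphism `v * g`, acting as `g` on the subtree rooted
at `v` and trivially elsewhere. -/
def vstar (v : V) (g : Perm V) : Perm V where
  toFun := vstarFun v g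
  invFun := vstarFun v g.symm
  left_inv := fun w => by
    rw [vstarFun_comp, Equiv.symm_comp_self]
    exact vstarFun_id v w
  right_inv := fun w => by
    rw [vstarFun_comp, Equiv.self_comp_symm]
    exact vstarFun_id v w

/-- `XstarSub n H` is the subgroup `Xⁿ * H`: the product of the copies `v * H`
over all vertices `v` of level `n` (equivalently, the subgroup they generate). -/
def XstarSub (n : ℕ) (H : Subgroup (Perm V)) : Subgroup (Perm V) :=
  Subgroup.closure {p | ∃ v : V, ∃ g : Perm V, v.length = n ∧ g ∈ H ∧ p = vstar v g}

/-- `pairPerm s₀ s₁ = ψ⁻¹(s₀, s₁)`: the first-level stabilizer element whose states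
at the vertices `0` and `1` are `s₀` and `s₁`. -/
def pairPerm (s₀ s₁ : Perm V) : Perm V := vstar [false] s₀ * vstar [true] s₁

/-- The permutations fixing every vertex of level `n`. -/
def stabLevel (n : ℕ) : Subgroup (Perm V) where
  carrier := {g : Perm V | ∀ v : V, v.length = n → g v = v}
  one_mem' := fun _ _ => rfl
  mul_mem' := by
    intro g h hg hh v hv
    show g (h v) = v
    rw [hh v hv, hg v hv]
  inv_mem' := by
    intro g hg v hv
    show g⁻¹ v = v
    conv_lhs => rw [← hg v hv]
    exact Equiv.symm_apply_apply g v

/-- The `n`-th level stabilizer `Stab_G(n)` of `G`. -/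
def stabG (n : ℕ) : Subgroup (Perm V) := G ⊓ stabLevel n

/-- The commutator `[x, y] = x⁻¹ y⁻¹ x y` (paper convention). -/
def pc (x y : Perm V) : Perm V := x⁻¹ * y⁻¹ * x * y
/-- Conjugation `xʸ = y⁻¹ x y`. -/
def cj (x y : Perm V) : Perm V := y⁻¹ * x * y

/-- The normal closure in `G` of a subset `S` of `G`. -/
def ncl (S : Set (Perm V)) : Subgroup (Perm V) :=
  Subgroup.closure {x | ∃ s ∈ S, ∃ g ∈ G, x = g⁻¹ * s * g}

/-- `K = ⟨[a,b],[b,c],[b,d],[c,d], bcd⟩^G`. -/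
def K : Subgroup (Perm V) := ncl {pc a b, pc b c, pc b d, pc c d, b * c * d}

/-- The subgroup `[K, G]`. -/
def KG : Subgroup (Perm V) := ⁅K, G⁆

/-- The subgroup `C`, generated by `[K,G]` and `[a,b][b,c]`. -/
def Csub : Subgroup (Perm V) := KG ⊔ Subgroup.closure {pc a b * pc b c}

/-- `γ_n(G)`, the `n`-th term of the lower central series of `G` (starting at `γ₁ = G`),
viewed as a subgroup of `Perm V`. -/
def gammaG (n : ℕ) : Subgroup (Perm V) :=
  Subgroup.map G.subtype ((⊤ : Subgroup ↥G).lowerCentralSeries (n - 1))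


/-- The nucleus `N = {1, a, b, c, d}`. -/
def nucleus : Set (Perm V) := {1, a, b, c, d}

/-!
Every element of `G` is a product of the involutions `a, b, c, d`. Weight such words by
`|a| = 1`, `|b| = |c| = |d| = 2`. Since `ψ(b) = (c, a)`, `ψ(c) = (a, d)`, `ψ(d) = (1, b)`
and `a` contributes nothing to the states, passing to a state never increases the weight,
and two levels down the weight strictly drops unless the word is a power of a single letter,
hence represents an element of `N`; induction on the weight proves contraction. Minimality
holds because `d` reproduces itself along `101` and has states `b, c, a` at `1, 10, 11`, so
every element of `N` is a state of `d` at arbitrarily deep vertices.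
-/

theorem hasState.append {g s t : Perm V} {u v : V} (hs : hasState g u s)
    (ht : hasState s v t) : hasState g (u ++ v) t := fun w => by
  rw [List.append_assoc, hs, ht, hs, List.append_assoc]

theorem hasState.unique {g s t : Perm V} {v : V} (hs : hasState g v s)
    (ht : hasState g v t) : s = t :=
  Equiv.ext fun w => List.append_cancel_left ((hs w).symm.trans (ht w))

theorem hasState_one (v : V) : hasState 1 v 1 := fun _ => rfl

theorem hasState_b_false : hasState b [false] c := fun _ => rfl
theorem hasState_b_true : hasState b [true] a := fun _ => rfl
theorem hasState_c_true : hasState c [true] d := fun _ => rfl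
theorem hasState_d_true : hasState d [true] b := fun _ => rfl

def StatesEventuallyIn (S : Set (Perm V)) (g : Perm V) : Prop :=
  ∃ n : ℕ, ∀ v : V, n ≤ v.length → ∃ s ∈ S, hasState g v s

theorem StatesEventuallyIn.of_root {S : Set (Perm V)} {g : Perm V}
    (h : ∀ x : Bool, ∃ s, hasState g [x] s ∧ StatesEventuallyIn S s) :
    StatesEventuallyIn S g := by
  choose s hs n hn using h
  refine ⟨max (n false) (n true) + 1, fun v hv => ?_⟩
  obtain _ | ⟨x, v⟩ := v
  · simp at hv
  · have hnx : n x ≤ v.length := by cases x <;> simp at hv <;> omega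
    obtain ⟨t, htS, ht⟩ := hn x v hnx
    exact ⟨t, htS, (hs x).append ht⟩

theorem StatesEventuallyIn.mem_of_deep {S : Set (Perm V)} {g t : Perm V}
    (hg : StatesEventuallyIn S g) (ht : ∀ n : ℕ, ∃ v : V, n ≤ v.length ∧ hasState g v t) :
    t ∈ S := by
  obtain ⟨n, hn⟩ := hg
  obtain ⟨v, hv, hgt⟩ := ht n
  obtain ⟨s, hsS, hgs⟩ := hn v hv
  rwa [hgs.unique hgt] at hsS

/-- Letters for `a, b, c, d`. A word over `Gen` records the wreath recursion of its product:
`act` is the permutation of the first level and `state x` the state at `x`, again as a word. -/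
inductive Gen | A | B | C | D

namespace Gen

def perm : Gen → Perm V
  | A => a | B => b | C => c | D => d

def act : Gen → Bool → Bool
  | A, x => !x | _, x => x

def state : Gen → Bool → List Gen
  | A, _ => []
  | B, false => [C] | B, true => [A]
  | C, false => [A] | C, true => [D]
  | D, false => [] | D, true => [B]

def cost : Gen → ℕ
  | A => 1 | _ => 2

theorem perm_mul_self (g : Gen) : g.perm * g.perm = 1 := by
  ext1 w
  cases g
  exacts [actA_invol w, actB_invol w, actC_invol w, actD_invol w]

end Gen

open Gen

def wordPerm (l : List Gen) : Perm V := (l.map Gen.perm).prod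

def wordAct (l : List Gen) (x : Bool) : Bool := l.foldr Gen.act x

def wordState : List Gen → Bool → List Gen
  | [], _ => []
  | g :: t, x => g.state (wordAct t x) ++ wordState t x

def wordCost (l : List Gen) : ℕ := (l.map Gen.cost).sum

@[simp] theorem wordPerm_nil : wordPerm [] = 1 := rfl
@[simp] theorem wordPerm_cons (g : Gen) (t : List Gen) :
    wordPerm (g :: t) = g.perm * wordPerm t := by simp [wordPerm]
@[simp] theorem wordPerm_append (s t : List Gen) :
    wordPerm (s ++ t) = wordPerm s * wordPerm t := by simp [wordPerm]

@[simp] theorem wordCost_cons (g : Gen) (t : List Gen) :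
    wordCost (g :: t) = g.cost + wordCost t := by simp [wordCost]
@[simp] theorem wordCost_append (s t : List Gen) :
    wordCost (s ++ t) = wordCost s + wordCost t := by simp [wordCost]

theorem Gen.perm_apply_cons (g : Gen) (x : Bool) (w : V) :
    g.perm (x :: w) = g.act x :: wordPerm (g.state x) w := by
  cases g <;> cases x <;> simp [perm, act, state, wordPerm, actA, actB, actC, actD]

theorem wordPerm_apply_cons (l : List Gen) (x : Bool) (w : V) :
    wordPerm l (x :: w) = wordAct l x :: wordPerm (wordState l x) w := by
  induction l with
  | nil => simp [wordAct, wordState]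
  | cons g t ih =>
    simp only [wordPerm_cons, Perm.mul_apply, ih, g.perm_apply_cons, wordState,
      wordPerm_append, wordAct, List.foldr_cons]

theorem wordPerm_apply_nil (l : List Gen) : wordPerm l [] = [] := by
  induction l with
  | nil => rfl
  | cons g t ih => cases g <;> simp only [wordPerm_cons, Perm.mul_apply, ih] <;> rfl

theorem hasState_wordPerm_nil (l : List Gen) : hasState (wordPerm l) [] (wordPerm l) :=
  fun w => by rw [wordPerm_apply_nil]; rfl

theorem hasState_wordPerm_singleton (l : List Gen) (x : Bool) :
    hasState (wordPerm l) [x] (wordPerm (wordState l x)) := fun w => by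
  rw [List.singleton_append, wordPerm_apply_cons, wordPerm_apply_cons, wordPerm_apply_nil]
  rfl

theorem exists_word_of_mem_G {g : Perm V} (hg : g ∈ G) : ∃ l : List Gen, wordPerm l = g := by
  have perm_inv (g : Gen) : g.perm⁻¹ = g.perm := inv_eq_of_mul_eq_one_right g.perm_mul_self
  induction hg using Subgroup.closure_induction with
  | mem x hx =>
    rcases hx with rfl | rfl | rfl | rfl
    exacts [⟨[A], by simp [perm]⟩, ⟨[B], by simp [perm]⟩, ⟨[C], by simp [perm]⟩,
      ⟨[D], by simp [perm]⟩]
  | one => exact ⟨[], rfl⟩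
  | mul x y _ _ hx hy =>
    obtain ⟨lx, rfl⟩ := hx
    obtain ⟨ly, rfl⟩ := hy
    exact ⟨lx ++ ly, wordPerm_append lx ly⟩
  | inv x _ hx =>
    obtain ⟨lx, rfl⟩ := hx
    refine ⟨lx.reverse, ?_⟩
    simp [wordPerm, List.prod_inv_reverse, Function.comp_def, perm_inv]

theorem length_wordState_le_one {l : List Gen} (hl : l.length ≤ 1) (x : Bool) :
    (wordState l x).length ≤ 1 := by
  match l, hl with
  | [], _ => exact Nat.zero_le 1
  | [g], _ => cases g <;> cases x <;> simp [wordState, wordAct, state]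

theorem wordPerm_mem_nucleus {l : List Gen} (hl : l.length ≤ 1) : wordPerm l ∈ nucleus := by
  match l, hl with
  | [], _ => simp [nucleus]
  | [g], _ => cases g <;> simp [nucleus, perm]

theorem statesEventuallyIn_nucleus_of_length_le_one {l : List Gen} (hl : l.length ≤ 1) :
    StatesEventuallyIn nucleus (wordPerm l) := by
  suffices ∀ v : V, ∀ l : List Gen, l.length ≤ 1 →
      ∃ l' : List Gen, l'.length ≤ 1 ∧ hasState (wordPerm l) v (wordPerm l') by
    refine ⟨0, fun v _ => ?_⟩
    obtain ⟨l', hl', hs⟩ := this v l hl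
    exact ⟨_, wordPerm_mem_nucleus hl', hs⟩
  intro v
  induction v with
  | nil => exact fun l hl => ⟨l, hl, hasState_wordPerm_nil l⟩
  | cons x v ih =>
    intro l hl
    obtain ⟨l', hl', hs⟩ := ih _ (length_wordState_le_one hl x)
    exact ⟨l', hl', (hasState_wordPerm_singleton l x).append hs⟩

theorem wordPerm_replicate (g : Gen) :
    ∀ n : ℕ, wordPerm (List.replicate n g) = wordPerm (List.replicate (n % 2) g)
  | 0 | 1 => rfl
  | n + 2 => by
    rw [List.replicate_succ, List.replicate_succ, wordPerm_cons, wordPerm_cons, ← mul_assoc,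
      g.perm_mul_self, one_mul, Nat.add_mod_right, wordPerm_replicate g n]

theorem exists_short_word_of_forall_eq {l : List Gen} (hl : ∀ g ∈ l, ∀ h ∈ l, g = h) :
    ∃ l' : List Gen, l'.length ≤ 1 ∧ wordPerm l' = wordPerm l := by
  obtain _ | ⟨g, t⟩ := l
  · exact ⟨[], Nat.zero_le 1, rfl⟩
  · have hrep : g :: t = List.replicate (t.length + 1) g :=
      List.eq_replicate_iff.mpr ⟨rfl, fun h hh => hl h hh g List.mem_cons_self⟩
    refine ⟨List.replicate ((t.length + 1) % 2) g, ?_, ?_⟩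
    · rw [List.length_replicate]; omega
    · rw [hrep]
      exact (wordPerm_replicate g _).symm

theorem Gen.cost_state_le (g : Gen) (x : Bool) : wordCost (g.state x) ≤ g.cost := by
  cases g <;> cases x <;> decide

theorem wordCost_wordState_le (l : List Gen) (x : Bool) :
    wordCost (wordState l x) ≤ wordCost l := by
  induction l with
  | nil => exact le_refl 0
  | cons g t ih =>
    simp only [wordState, wordCost_append, wordCost_cons]
    exact Nat.add_le_add (g.cost_state_le _) ih

theorem wordCost_wordState_lt_of_A_mem {l : List Gen} (h : A ∈ l) (x : Bool) :
    wordCost (wordState l x) < wordCost l := by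
  induction l with
  | nil => simp at h
  | cons g t ih =>
    simp only [wordState, wordCost_append, wordCost_cons]
    rcases List.mem_cons.mp h with rfl | ht
    · have : wordCost (A.state (wordAct t x)) = 0 := rfl
      have := wordCost_wordState_le t x
      simp only [cost]
      omega
    · have := g.cost_state_le (wordAct t x)
      have := ih ht
      omega

theorem wordAct_of_A_not_mem {l : List Gen} (hA : A ∉ l) (x : Bool) : wordAct l x = x := by
  induction l with
  | nil => rfl
  | cons g t ih =>
    have hg : g ≠ A := fun e => hA (e ▸ List.mem_cons_self)
    have ht : A ∉ t := fun e => hA (List.mem_cons_of_mem _ e)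
    simp only [wordAct, List.foldr_cons] at ih ⊢
    rw [ih ht]
    cases g <;> simp_all [act]

theorem wordState_of_A_not_mem {l : List Gen} (hA : A ∉ l) (x : Bool) :
    wordState l x = l.flatMap (Gen.state · x) := by
  induction l with
  | nil => rfl
  | cons g t ih =>
    have ht : A ∉ t := fun e => hA (List.mem_cons_of_mem _ e)
    simp only [wordState, List.flatMap_cons, ih ht, wordAct_of_A_not_mem ht]

theorem wordCost_wordState_lt_of_mem {l : List Gen} {g : Gen} (hA : A ∉ l) (hg : g ∈ l)
    {x : Bool} (hlt : wordCost (g.state x) < g.cost) :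
    wordCost (wordState l x) < wordCost l := by
  induction l with
  | nil => simp at hg
  | cons h t ih =>
    have ht : A ∉ t := fun e => hA (List.mem_cons_of_mem _ e)
    simp only [wordState, wordCost_append, wordCost_cons, wordAct_of_A_not_mem ht]
    rcases List.mem_cons.mp hg with rfl | hgt
    · have := wordCost_wordState_le t x
      omega
    · have := h.cost_state_le x
      have := ih ht hgt
      omega

theorem wordCost_wordState_wordState_lt {l : List Gen} (hl : ∃ g ∈ l, ∃ h ∈ l, g ≠ h)
    (x y : Bool) : wordCost (wordState (wordState l x) y) < wordCost l := by
  obtain ⟨g, hg, h, hh, hgh⟩ := hl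
  suffices wordCost (wordState l x) < wordCost l ∨
      wordCost (wordState (wordState l x) y) < wordCost (wordState l x) by
    have := wordCost_wordState_le (wordState l x) y
    have := wordCost_wordState_le l x
    omega
  by_cases hA : A ∈ l
  · exact .inl (wordCost_wordState_lt_of_A_mem hA x)
  cases x with
  | false =>
    -- one of the two distinct letters is `c` or `d`, whose state at `0` is lighter
    obtain ⟨k, hk, hkB⟩ : ∃ k ∈ l, k ≠ B := by
      by_cases hgB : g = B
      · exact ⟨h, hh, hgB ▸ hgh.symm⟩
      · exact ⟨g, hg, hgB⟩
    refine .inl (wordCost_wordState_lt_of_mem hA hk ?_)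
    cases k with
    | A => exact absurd hk hA
    | B => exact absurd rfl hkB
    | C | D => decide
  | true =>
    by_cases hB : B ∈ l
    · exact .inl (wordCost_wordState_lt_of_mem hA hB (by decide))
    -- now `l` is a word in `c` and `d` containing both; its state at `1` contains `d` and `b`
    have hCD : ∀ k ∈ l, k = C ∨ k = D := fun k hk => by cases k <;> simp_all
    obtain ⟨hC, hD⟩ : C ∈ l ∧ D ∈ l := by
      rcases hCD g hg with rfl | rfl <;> rcases hCD h hh with rfl | rfl
      exacts [absurd rfl hgh, ⟨hg, hh⟩, ⟨hh, hg⟩, absurd rfl hgh]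
    have hm := wordState_of_A_not_mem hA true
    have hAm : A ∉ wordState l true := by
      rw [hm, List.mem_flatMap]
      rintro ⟨k, hk, hAk⟩
      rcases hCD k hk with rfl | rfl <;> simp [state] at hAk
    have hDm : D ∈ wordState l true := hm ▸ List.mem_flatMap.mpr ⟨C, hC, by simp [state]⟩
    have hBm : B ∈ wordState l true := hm ▸ List.mem_flatMap.mpr ⟨D, hD, by simp [state]⟩
    right
    cases y
    · exact wordCost_wordState_lt_of_mem hAm hDm (by decide)
    · exact wordCost_wordState_lt_of_mem hAm hBm (by decide)

theorem statesEventuallyIn_nucleus_wordPerm (l : List Gen) :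
    StatesEventuallyIn nucleus (wordPerm l) := by
  induction hl : wordCost l using Nat.strong_induction_on generalizing l with
  | _ n ih =>
    by_cases hne : ∃ g ∈ l, ∃ h ∈ l, g ≠ h
    · refine .of_root fun x => ⟨_, hasState_wordPerm_singleton l x, ?_⟩
      refine .of_root fun y => ⟨_, hasState_wordPerm_singleton _ y, ?_⟩
      exact ih _ (hl ▸ wordCost_wordState_wordState_lt hne x y) _ rfl
    · push Not at hne
      obtain ⟨l', hl', hperm⟩ := exists_short_word_of_forall_eq hne
      exact hperm ▸ statesEventuallyIn_nucleus_of_length_le_one hl'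

theorem hasState_d_deep (n : ℕ) : ∃ v : V, n ≤ v.length ∧ hasState d v d := by
  induction n with
  | zero => exact ⟨[], le_rfl, hasState_wordPerm_nil [D]⟩
  | succ n ih =>
    obtain ⟨v, hv, hd⟩ := ih
    refine ⟨v ++ [true, false, true], by simp only [List.length_append, List.length_cons]; omega, hd.append ?_⟩
    exact (hasState_d_true.append hasState_b_false).append hasState_c_true

theorem nucleus_subset_of_statesEventuallyIn {N : Set (Perm V)}
    (hN : StatesEventuallyIn N d) (h1 : StatesEventuallyIn N 1) : nucleus ⊆ N := by
  have of_d {t : Perm V} (u : V) (hu : hasState d u t) : t ∈ N :=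
    hN.mem_of_deep fun n => by
      obtain ⟨v, hv, hd⟩ := hasState_d_deep n
      exact ⟨v ++ u, by simp only [List.length_append]; omega, hd.append hu⟩
  rintro t (rfl | rfl | rfl | rfl | rfl)
  · exact h1.mem_of_deep fun n => ⟨List.replicate n true, by simp, hasState_one _⟩
  · exact of_d [true, true] (hasState_d_true.append hasState_b_true)
  · exact of_d [true] hasState_d_true
  · exact of_d [true, false] (hasState_d_true.append hasState_b_false)
  · exact of_d [] (hasState_wordPerm_nil [D])

/-- **Lemma.** `G` is contracting with nucleus `N = {1, a, b, c, d}`: every `g ∈ G`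
has all its states at levels `≥ n` inside `N` for some `n`, and `N` is the minimal
finite subset of `G` with this property. -/
theorem stmt3 :
    (∀ g ∈ G, ∃ n : ℕ, ∀ v : V, n ≤ v.length → ∃ s ∈ nucleus, hasState g v s) ∧
    (∀ N' : Set (Perm V), N'.Finite → N' ⊆ ↑G →
      (∀ g ∈ G, ∃ n : ℕ, ∀ v : V, n ≤ v.length → ∃ s ∈ N', hasState g v s) →
      nucleus ⊆ N') := by
  refine ⟨fun g hg => ?_, fun N' _ _ hN' => ?_⟩
  · obtain ⟨l, rfl⟩ := exists_word_of_mem_G hg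
    exact statesEventuallyIn_nucleus_wordPerm l
  · exact nucleus_subset_of_statesEventuallyIn (hN' d d_mem_G) (hN' 1 (one_mem G))
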